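/- If R₁ : 𝒳 → 𝒴 (with 𝒴 countable) is a deletion ε₁-LDP randomizer and R₂ : 𝒴 → 𝒵 is an ε₂-LDP randomizer, then the composition R₂ ∘ R₁ is a deletion ε-LDP randomizer, where ε = ln((e^{ε₁+ε₂} + 1)/(e^{ε₁} + e^{ε₂})). -/

import Mathlib

open scoped ENNReal

/-- Probability that a sample from the PMF `p` lands in the set `S` (as a real number). -/
noncomputable def pr {Y : Type*} (p : PMF Y) (S : Set Y) : ℝ :=
  (p.toOuterMeasure S).toReal

/-- The local randomizer `R` satisfies `ε`-local differential privacy. -/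
def IsPureLDP {X Y : Type*} (R : X → PMF Y) (ε : ℝ) : Prop :=
  ∀ x x' : X, ∀ S : Set Y, pr (R x) S ≤ Real.exp ε * pr (R x') S

/-- `R` is a deletion `ε`-LDP randomizer: there is a reference distribution `R₀` such
that `e^{-ε} Pr[R₀ ∈ S] ≤ Pr[R(x) ∈ S] ≤ e^ε Pr[R₀ ∈ S]` for all `x` and `S`. -/
def IsPureDeletionLDP {X Y : Type*} (R : X → PMF Y) (ε : ℝ) : Prop :=
  ∃ R₀ : PMF Y, ∀ x : X, ∀ S : Set Y,
    Real.exp (-ε) * pr R₀ S ≤ pr (R x) S ∧ pr (R x) S ≤ Real.exp ε * pr R₀ S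

/-!
Take `R₀.bind R₂` as the reference distribution. Fix `S`, put `q y = Pr[R₂ y ∈ S]` and let `m` be
the infimum of `q`, so that `ε₂`-LDP puts every `q y` in `[m, b m]`, where `b = e^{ε₂}`. With
`a = e^{ε₁}`, `p = Pr[R₁ x = y]` and `P = Pr[R₀ = y]`, the identity
`b (a + 1) m (p - P) - ((a + b) p q - (a b + 1) P q) = b (a P - p) (q - m) + (a p - P) (b m - q)`
shows that the left side is nonnegative. Summed over `y`, the terms `p - P` cancel because both
distributions have mass one, which gives `(a + b) Pr[R₂(R₁ x) ∈ S] ≤ (a b + 1) Pr[R₂(R₀) ∈ S]`;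
exchanging `R₁ x` and `R₀` gives the other bound.
-/

open Real

lemma pr_singleton {Y : Type*} (p : PMF Y) (y : Y) : pr p {y} = (p y).toReal := by
  rw [pr, PMF.toOuterMeasure_apply_singleton]

lemma pr_bind {Y Z : Type*} (p : PMF Y) (f : Y → PMF Z) (S : Set Z) :
    pr (p.bind f) S = ∑' y, (p y).toReal * pr (f y) S := by
  have hfin : ∀ y, (f y).toOuterMeasure S ≠ ⊤ := fun y => by
    rw [PMF.toOuterMeasure_apply]; exact (f y).tsum_coe_indicator_ne_top S
  rw [pr, PMF.toOuterMeasure_bind_apply,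
    ENNReal.tsum_toReal_eq fun y => ENNReal.mul_ne_top (p.apply_ne_top y) (hfin y)]
  exact tsum_congr fun y => ENNReal.toReal_mul

lemma PMF.hasSum_toReal_one {Y : Type*} (p : PMF Y) : HasSum (fun y => (p y).toReal) 1 := by
  have h := ENNReal.hasSum_toReal p.tsum_coe_ne_top
  rwa [← ENNReal.tsum_toReal_eq p.apply_ne_top, p.tsum_coe, ENNReal.toReal_one] at h

lemma IsPureLDP.exists_forall_pr_mem_Icc {X Y : Type*} [Nonempty X] {R : X → PMF Y} {ε : ℝ}
    (h : IsPureLDP R ε) (S : Set Y) :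
    ∃ m, 0 ≤ m ∧ ∀ x, pr (R x) S ∈ Set.Icc m (exp ε * m) := by
  have hnonneg : ∀ x, 0 ≤ pr (R x) S := fun x => ENNReal.toReal_nonneg
  refine ⟨⨅ x, pr (R x) S, le_ciInf hnonneg, fun x => ⟨ciInf_le ⟨0, ?_⟩ x, ?_⟩⟩
  · rintro _ ⟨x', rfl⟩; exact hnonneg x'
  · rw [← div_le_iff₀' (exp_pos ε)]
    exact le_ciInf fun x' => (div_le_iff₀' (exp_pos ε)).2 (h x x' S)

lemma bilinear_box_le {a b p P q m : ℝ} (hb : 0 ≤ b)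
    (hPp : P ≤ a * p) (hpP : p ≤ a * P) (hmq : m ≤ q) (hqm : q ≤ b * m) :
    (a + b) * (p * q) - (a * b + 1) * (P * q) ≤ b * (a + 1) * m * (p - P) := by
  linarith [mul_nonneg hb (mul_nonneg (sub_nonneg.2 hpP) (sub_nonneg.2 hmq)),
    mul_nonneg (sub_nonneg.2 hPp) (sub_nonneg.2 hqm)]

lemma tsum_mul_le_of_ratio_le {Y : Type*} {a b m : ℝ} (hb : 0 ≤ b) (hm : 0 ≤ m)
    {p P q : Y → ℝ} (hp : ∀ y, 0 ≤ p y) (hP : ∀ y, 0 ≤ P y)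
    (hPp : ∀ y, P y ≤ a * p y) (hpP : ∀ y, p y ≤ a * P y) (hq : ∀ y, q y ∈ Set.Icc m (b * m))
    (hp1 : HasSum p 1) (hP1 : HasSum P 1) :
    (a + b) * ∑' y, p y * q y ≤ (a * b + 1) * ∑' y, P y * q y := by
  have summable_mul {r : Y → ℝ} (hr : ∀ y, 0 ≤ r y) (hr1 : HasSum r 1) :
      Summable fun y => r y * q y :=
    (hr1.summable.mul_right (b * m)).of_nonneg_of_le
      (fun y => mul_nonneg (hr y) (hm.trans (hq y).1))
      (fun y => mul_le_mul_of_nonneg_left (hq y).2 (hr y))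
  have hsum := hasSum_le
    (fun y => bilinear_box_le hb (hPp y) (hpP y) (hq y).1 (hq y).2)
    (((summable_mul hp hp1).hasSum.mul_left (a + b)).sub
      ((summable_mul hP hP1).hasSum.mul_left (a * b + 1)))
    ((hp1.sub hP1).mul_left (b * (a + 1) * m))
  linarith

lemma pr_bind_le_of_ratio_le {Y Z : Type*} {p P : PMF Y} {f : Y → PMF Z} {ε₁ ε₂ : ℝ}
    (hPp : ∀ y, (P y).toReal ≤ exp ε₁ * (p y).toReal)
    (hpP : ∀ y, (p y).toReal ≤ exp ε₁ * (P y).toReal) (hf : IsPureLDP f ε₂) (S : Set Z) :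
    pr (p.bind f) S ≤ (exp (ε₁ + ε₂) + 1) / (exp ε₁ + exp ε₂) * pr (P.bind f) S := by
  have : Nonempty Y := ⟨p.support_nonempty.some⟩
  obtain ⟨m, hm, hq⟩ := hf.exists_forall_pr_mem_Icc S
  rw [pr_bind, pr_bind, exp_add, div_mul_eq_mul_div, le_div_iff₀ (by positivity), mul_comm]
  exact tsum_mul_le_of_ratio_le (exp_pos ε₂).le hm
    (fun _ => ENNReal.toReal_nonneg) (fun _ => ENNReal.toReal_nonneg) hPp hpP hq
    p.hasSum_toReal_one P.hasSum_toReal_one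

theorem composition_of_deletion_ldp_randomizers_general {X Y Z : Type*} (ε₁ ε₂ : ℝ)
    (R₁ : X → PMF Y) (R₂ : Y → PMF Z)
    (h₁ : IsPureDeletionLDP R₁ ε₁) (h₂ : IsPureLDP R₂ ε₂) :
    IsPureDeletionLDP (fun x => (R₁ x).bind R₂)
      (Real.log ((Real.exp (ε₁ + ε₂) + 1) / (Real.exp ε₁ + Real.exp ε₂))) := by
  obtain ⟨R₀, hR₀⟩ := h₁
  refine ⟨R₀.bind R₂, fun x S => ?_⟩
  have hpP : ∀ y, (R₁ x y).toReal ≤ exp ε₁ * (R₀ y).toReal := fun y => by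
    simpa only [pr_singleton] using (hR₀ x {y}).2
  have hPp : ∀ y, (R₀ y).toReal ≤ exp ε₁ * (R₁ x y).toReal := fun y => by
    rw [← inv_mul_le_iff₀ (exp_pos ε₁), ← exp_neg]
    simpa only [pr_singleton] using (hR₀ x {y}).1
  rw [exp_neg, exp_log (by positivity), inv_mul_le_iff₀ (by positivity)]
  exact ⟨pr_bind_le_of_ratio_le hpP hPp h₂ S, pr_bind_le_of_ratio_le hPp hpP h₂ S⟩

/-- Composition preserves deletion LDP: if `R₁ : 𝒳 → 𝒴` (with `𝒴` countable) is a
deletion `ε₁`-LDP randomizer and `R₂ : 𝒴 → 𝒵` is an `ε₂`-LDP randomizer, then the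
composition `R₂ ∘ R₁` (i.e. `x ↦ (R₁ x).bind R₂`) is a deletion `ε`-LDP randomizer, for
`ε = ln((e^{ε₁+ε₂} + 1)/(e^{ε₁} + e^{ε₂}))`. -/
theorem composition_of_deletion_ldp_randomizers {X Y Z : Type*} [Countable Y]
    (ε₁ ε₂ : ℝ) (hε₁ : 0 ≤ ε₁) (hε₂ : 0 ≤ ε₂)
    (R₁ : X → PMF Y) (R₂ : Y → PMF Z)
    (h₁ : IsPureDeletionLDP R₁ ε₁) (h₂ : IsPureLDP R₂ ε₂) :
    IsPureDeletionLDP (fun x => (R₁ x).bind R₂)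
      (Real.log ((Real.exp (ε₁ + ε₂) + 1) / (Real.exp ε₁ + Real.exp ε₂))) :=
  composition_of_deletion_ldp_randomizers_general ε₁ ε₂ R₁ R₂ h₁ h₂
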